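/- Let p be an odd prime, a a positive integer, and m an integer not divisible by p. Then ((m−4)/2)·∑_{k=0}^{p^a−1} k·C(2k,k)/m^k ≡ ∑_{k=0}^{p^a−1} C(2k,k)/m^k − p^a (mod p^{a+1}), where the congruence is between rational numbers whose denominators are coprime to p (i.e., it holds in the localization ℤ_(p)). -/

import Mathlib

/-!
By the recurrence `(k + 1) C(2k+2, k+1) = 2 (2k + 1) C(2k, k)`, the left side minus the first sum
telescopes to `-(m / 2) n C(2n, n) / m ^ n`. For `n = p ^ a` the difference of the two sides is
therefore `p ^ a (2 m ^ n - m C(2n, n)) / (2 m ^ n)`. Modulo `p`, Lucas's theorem gives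
`C(2 p ^ a, p ^ a) ≡ 2` and Fermat gives `m ^ p ^ a ≡ m`, so the numerator is divisible by `p`,
while `p ∤ 2 m ^ n` since `p` is odd and prime to `m`.
-/

/-- `x ≡ y (mod p^n)` as rational numbers, i.e. in the localization `ℤ_(p)`. -/
def ratModCast (p n : ℕ) (x y : ℚ) : Prop :=
  ∃ z : ℚ, x - y = (p : ℚ) ^ n * z ∧ ¬ (p ∣ z.den)

theorem ratModCast_of_sub_eq_mul_div {p n : ℕ} {x y : ℚ} (c d : ℤ) (hd : ¬ (p : ℤ) ∣ d)
    (h : x - y = (p : ℚ) ^ n * (c / d)) : ratModCast p n x y := by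
  refine ⟨c / d, h, fun hden => hd ?_⟩
  have hden_dvd : (((c : ℚ) / d).den : ℤ) ∣ d := by
    rw [← Rat.divInt_eq_div]
    exact Rat.den_dvd c d
  exact (Int.natCast_dvd_natCast.mpr hden).trans hden_dvd

theorem sum_mul_centralBinom_div_pow_telescope {K : Type*} [Field K] (h2 : (2 : K) ≠ 0) {m : K}
    (hm : m ≠ 0) (n : ℕ) :
    (m - 4) / 2 * ∑ k ∈ Finset.range n, (k : K) * k.centralBinom / m ^ k
      - ∑ k ∈ Finset.range n, (k.centralBinom : K) / m ^ k
      = -(m / 2) * n * n.centralBinom / m ^ n := by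
  induction n with
  | zero => simp
  | succ n ih =>
    have hrec : ((n : K) + 1) * (n + 1).centralBinom = 2 * (2 * n + 1) * n.centralBinom := by
      simpa using congrArg (Nat.cast : ℕ → K) (Nat.succ_mul_centralBinom_succ n)
    rw [Finset.sum_range_succ, Finset.sum_range_succ, mul_add, add_sub_add_comm, ih, pow_succ]
    push_cast
    field_simp
    linear_combination hrec

theorem Nat.centralBinom_prime_pow_modEq_two {p : ℕ} [Fact p.Prime] (a : ℕ) :
    (p ^ a).centralBinom ≡ 2 [MOD p] := by
  induction a with
  | zero => rfl
  | succ a ih =>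
    have hlucas : (p ^ (a + 1)).centralBinom ≡ (p ^ a).centralBinom [MOD p] := by
      rw [Nat.centralBinom_eq_two_mul_choose, Nat.centralBinom_eq_two_mul_choose, pow_succ',
        mul_left_comm]
      exact Choose.choose_mul_mul_modEq_choose_nat
    exact hlucas.trans ih

theorem dvd_two_mul_pow_prime_pow_sub_mul_centralBinom {p : ℕ} [Fact p.Prime] (a : ℕ) (m : ℤ) :
    (p : ℤ) ∣ 2 * m ^ p ^ a - m * (p ^ a).centralBinom := by
  have hbinom : ((p ^ a).centralBinom : ZMod p) = 2 := by
    exact_mod_cast (ZMod.natCast_eq_natCast_iff' _ 2 p).mpr (Nat.centralBinom_prime_pow_modEq_two a)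
  rw [← ZMod.intCast_zmod_eq_zero_iff_dvd]
  push_cast
  rw [ZMod.pow_card_pow, hbinom]
  ring

theorem not_dvd_two_mul_pow {p : ℕ} (hp : p.Prime) (hp2 : p ≠ 2) {m : ℤ} (hm : ¬ (p : ℤ) ∣ m)
    (n : ℕ) : ¬ (p : ℤ) ∣ 2 * m ^ n := by
  have hpZ : Prime (p : ℤ) := Nat.prime_iff_prime_int.mp hp
  rintro hdvd
  rcases hpZ.dvd_mul.mp hdvd with h | h
  · exact hp2 ((Nat.prime_dvd_prime_iff_eq hp Nat.prime_two).mp (by exact_mod_cast h))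
  · exact hm (hpZ.dvd_of_dvd_pow h)

theorem sum_mul_central_binom_full_general (p : ℕ) (hp : p.Prime) (hp2 : p ≠ 2)
    (a : ℕ) (m : ℤ) (hm : ¬ ((p : ℤ) ∣ m)) :
    ratModCast p (a + 1)
      (((m : ℚ) - 4) / 2 *
        ∑ k ∈ Finset.range (p ^ a),
          (k : ℚ) * (Nat.choose (2 * k) k : ℚ) / (m : ℚ) ^ k)
      ((∑ k ∈ Finset.range (p ^ a),
          (Nat.choose (2 * k) k : ℚ) / (m : ℚ) ^ k) - (p : ℚ) ^ a) := by
  have : Fact p.Prime := ⟨hp⟩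
  have hmQ : (m : ℚ) ≠ 0 := Int.cast_ne_zero.mpr (by rintro rfl; exact hm (dvd_zero _))
  obtain ⟨c, hc⟩ := dvd_two_mul_pow_prime_pow_sub_mul_centralBinom (p := p) a m
  have hcQ : 2 * (m : ℚ) ^ p ^ a - m * (p ^ a).centralBinom = p * c := by exact_mod_cast hc
  have htele := sum_mul_centralBinom_div_pow_telescope two_ne_zero hmQ (p ^ a)
  simp only [Nat.centralBinom_eq_two_mul_choose] at htele hcQ
  refine ratModCast_of_sub_eq_mul_div c (2 * m ^ p ^ a) (not_dvd_two_mul_pow hp hp2 hm _) ?_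
  push_cast at htele ⊢
  field_simp at htele ⊢
  linear_combination htele + (p : ℚ) ^ a * hcQ

theorem sum_mul_central_binom_full (p : ℕ) (hp : p.Prime) (hp2 : p ≠ 2)
    (a : ℕ) (ha : 0 < a) (m : ℤ) (hm : ¬ ((p : ℤ) ∣ m)) :
    ratModCast p (a + 1)
      (((m : ℚ) - 4) / 2 *
        ∑ k ∈ Finset.range (p ^ a),
          (k : ℚ) * (Nat.choose (2 * k) k : ℚ) / (m : ℚ) ^ k)
      ((∑ k ∈ Finset.range (p ^ a),
          (Nat.choose (2 * k) k : ℚ) / (m : ℚ) ^ k) - (p : ℚ) ^ a) :=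
  sum_mul_central_binom_full_general p hp hp2 a m hm
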